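/- arXiv:1707.03238 — 3 statements merged into one kernel-verified Lean document; each statement's English description precedes it below -/
import Mathlib

section
/- Let n, k, q, s be positive integers and let T be an n×n integer matrix with T^s = I_n. If gcd(k, q^s - 1) = 1, then the matrix q·I_n - T is invertible modulo k (i.e., its determinant is a unit in Z/kZ). -/
/-- If `T^s = 1` and `gcd(k, q^s - 1) = 1`, then `q·I - T` is invertible mod `k`,
i.e. its determinant is a unit in `ℤ/kℤ`. -/
theorem stmt_0 (n k q s : ℕ) (hn : 0 < n) (hk : 0 < k) (hq : 0 < q) (hs : 0 < s)
    (T : Matrix (Fin n) (Fin n) ℤ) (hT : T ^ s = 1)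
    (hgcd : Nat.gcd k (q ^ s - 1) = 1) :
    IsUnit ((((q : ℤ) • (1 : Matrix (Fin n) (Fin n) ℤ) - T).det : ZMod k)) := by
  have hc : Commute ((q : ℤ) • (1 : Matrix (Fin n) (Fin n) ℤ)) T := by
    exact (Commute.one_left T).smul_left _
  have hdvd : ((q : ℤ) • (1 : Matrix (Fin n) (Fin n) ℤ) - T) ∣
      ((q : ℤ) ^ s - 1) • (1 : Matrix (Fin n) (Fin n) ℤ) := by
    have := hc.sub_dvd_pow_sub_pow s
    rw [hT, smul_pow, one_pow] at this
    rwa [sub_smul, one_smul]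
  obtain ⟨C, hC⟩ := hdvd
  have hdet : ((q : ℤ) • (1 : Matrix (Fin n) (Fin n) ℤ) - T).det ∣ ((q : ℤ) ^ s - 1) ^ n := by
    refine ⟨C.det, ?_⟩
    have := congrArg Matrix.det hC
    rwa [Matrix.det_mul, Matrix.smul_one_eq_diagonal, Matrix.det_diagonal,
      Finset.prod_const, Finset.card_univ, Fintype.card_fin] at this
  have hq1 : (1 : ℕ) ≤ q ^ s := Nat.one_le_pow _ _ hq
  have hcast : ((q : ℤ) ^ s - 1) = ((q ^ s - 1 : ℕ) : ℤ) := by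
    push_cast [hq1]; ring
  have hu : IsUnit (((q ^ s - 1 : ℕ) : ZMod k)) := by
    haveI : NeZero k := ⟨hk.ne'⟩
    rw [ZMod.isUnit_iff_coprime]
    exact Nat.coprime_comm.mp hgcd
  have hu' : IsUnit ((((q : ℤ) ^ s - 1) ^ n : ℤ) : ZMod k) := by
    rw [hcast]; push_cast; exact hu.pow n
  exact isUnit_of_dvd_unit (map_dvd (Int.castRingHom (ZMod k)) hdet) hu'
end

section
/- With T_k the normalized Chebyshev polynomial satisfying T_k(z + 1/z) = z^k + z^{-k}, the number of complex fixed points of T_k (counted as a set) is exactly k, for every integer k ≥ 2. -/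
/-!
Substituting `x = z + z⁻¹` (every complex `x` has this form) identifies `T_k` with the Chebyshev
polynomial `C_k`, which has degree `k`; so `T_k - X` has at most `k` roots. Conversely
`T_k (2 cos θ) = 2 cos (kθ)`, so `2 cos θ` is fixed whenever `(k + 1) θ` or `(k - 1) θ` lies in
`2πℤ`; there are `k` such angles in `[0, π]`, where `cos` is injective.
-/

open Polynomial Real

namespace Polynomial.Chebyshev

theorem natDegree_C_natCast {K : Type*} [Field K] [NeZero (2 : K)] (n : ℕ) :
    (C K n).natDegree = n := by
  let : Invertible (2 : K) := invertibleOfNonzero two_ne_zero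
  rw [C_eq_two_mul_T_comp_half_mul_X, ← C_ofNat, natDegree_C_mul two_ne_zero, natDegree_comp,
    natDegree_T, natDegree_C_mul_X _ (Invertible.ne_zero _)]
  simp

theorem natDegree_C_natCast_sub_X {K : Type*} [Field K] [NeZero (2 : K)] {n : ℕ} (hn : 2 ≤ n) :
    (C K n - X).natDegree = n := by
  rw [natDegree_sub_eq_left_of_natDegree_lt (by rw [natDegree_C_natCast, natDegree_X]; omega),
    natDegree_C_natCast]

theorem C_eval_add_of_mul_eq_one {R : Type*} [CommRing R] (n : ℕ) {x y : R} (h : x * y = 1) :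
    (C R n).eval (x + y) = x ^ n + y ^ n := by
  rw [← dickson_one_one_eq_chebyshev_C, dickson_one_one_eval_add_inv x y h]

end Polynomial.Chebyshev

theorem IsAlgClosed.exists_ne_zero_add_inv_eq {K : Type*} [Field K] [IsAlgClosed K] (x : K) :
    ∃ z ≠ 0, z + z⁻¹ = x := by
  obtain ⟨z, hz⟩ := IsAlgClosed.exists_root (X ^ 2 - Polynomial.C x * X + 1)
    (ne_of_eq_of_ne (by compute_degree!) two_ne_zero)
  simp only [IsRoot, eval_add, eval_sub, eval_pow, eval_mul, eval_X, eval_C, eval_one] at hz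
  have hz0 : z ≠ 0 := by rintro rfl; simp at hz
  refine ⟨z, hz0, ?_⟩
  field_simp
  linear_combination hz

theorem eq_chebyshev_C_of_eval_add_inv {K : Type*} [Field K] [IsAlgClosed K] {k : ℕ} {p : K[X]}
    (hp : ∀ z : K, z ≠ 0 → p.eval (z + z⁻¹) = z ^ k + z⁻¹ ^ k) : p = Chebyshev.C K k := by
  refine Polynomial.funext fun x => ?_
  obtain ⟨z, hz, rfl⟩ := IsAlgClosed.exists_ne_zero_add_inv_eq x
  rw [hp z hz, Chebyshev.C_eval_add_of_mul_eq_one k (mul_inv_cancel₀ hz)]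

theorem setOf_eval_eq_self_eq_roots {R : Type*} [CommRing R] [IsDomain R] [DecidableEq R]
    {p : R[X]} (hp : p ≠ X) : {x | p.eval x = x} = ↑(p - X).roots.toFinset := by
  ext x
  simp [mem_roots (sub_ne_zero.mpr hp), sub_eq_zero]

/-- The second family omits `0` and, for odd `k`, `π`: both already occur in the first. -/
noncomputable def chebyshevFixedAngles (k : ℕ) : Finset ℝ :=
  (Finset.range ((k + 1) / 2 + 1)).image (fun m : ℕ => 2 * π * m / (k + 1)) ∪
  (Finset.Icc 1 ((k - 2) / 2)).image (fun m : ℕ => 2 * π * m / (k - 1))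

theorem cos_mul_eq_cos_of_mem_chebyshevFixedAngles {k : ℕ} {θ : ℝ}
    (hθ : θ ∈ chebyshevFixedAngles k) : cos (k * θ) = cos θ := by
  rw [cos_eq_cos_iff]
  simp only [chebyshevFixedAngles, Finset.mem_union, Finset.mem_image, Finset.mem_range,
    Finset.mem_Icc] at hθ
  rcases hθ with ⟨m, -, rfl⟩ | ⟨m, hm, rfl⟩
  · refine ⟨m, Or.inr ?_⟩
    field_simp
    push_cast
    ring
  · have hk : (k : ℝ) - 1 ≠ 0 := by
      rw [sub_ne_zero, Nat.cast_ne_one]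
      omega
    refine ⟨-m, Or.inl ?_⟩
    field_simp
    push_cast
    ring

theorem chebyshevFixedAngles_subset_Icc (k : ℕ) : ↑(chebyshevFixedAngles k) ⊆ Set.Icc 0 π := by
  intro θ hθ
  simp only [chebyshevFixedAngles, Finset.coe_union, Finset.coe_image, Set.mem_union,
    Set.mem_image, Finset.mem_coe, Finset.mem_range, Finset.mem_Icc] at hθ
  rcases hθ with ⟨m, hm, rfl⟩ | ⟨m, hm, rfl⟩
  · have h2m : (2 * m : ℝ) ≤ k + 1 := by exact_mod_cast (by omega : 2 * m ≤ k + 1)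
    constructor
    · positivity
    · rw [div_le_iff₀ (by positivity)]
      nlinarith [pi_pos]
  · have h2m : (2 * m + 2 : ℝ) ≤ k := by exact_mod_cast (by omega : 2 * m + 2 ≤ k)
    constructor
    · exact div_nonneg (by positivity) (by linarith)
    · rw [div_le_iff₀ (by linarith)]
      nlinarith [pi_pos]

theorem two_pi_mul_div_add_one_ne_div_sub_one {k a b : ℕ} (hb : 1 ≤ b) (hbk : 2 * b + 2 ≤ k) :
    2 * π * a / (k + 1) ≠ 2 * π * b / (k - 1) := by
  have hb₁ : (1 : ℝ) ≤ b := by exact_mod_cast hb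
  have hbk' : (2 * b + 2 : ℝ) ≤ k := by exact_mod_cast hbk
  have hk₁ : (k : ℝ) - 1 ≠ 0 := by linarith
  intro hab
  have hab' : (b : ℝ) * (k + 1) = a * (k - 1) := by
    field_simp at hab
    linarith
  rcases le_or_gt a b with h | h
  · have h' : (a : ℝ) ≤ b := by exact_mod_cast h
    nlinarith
  · have h' : (b : ℝ) + 1 ≤ a := by exact_mod_cast h
    nlinarith

theorem card_chebyshevFixedAngles {k : ℕ} (hk : 2 ≤ k) : (chebyshevFixedAngles k).card = k := by
  have hk₁ : (k : ℝ) - 1 ≠ 0 := by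
    rw [sub_ne_zero, Nat.cast_ne_one]
    omega
  have hinj₁ : Set.InjOn (fun m : ℕ => 2 * π * m / (k + 1)) (Finset.range ((k + 1) / 2 + 1)) :=
    fun a _ b _ h => by
      simpa [pi_ne_zero, (by positivity : (k : ℝ) + 1 ≠ 0)] using h
  have hinj₂ : Set.InjOn (fun m : ℕ => 2 * π * m / (k - 1)) (Finset.Icc 1 ((k - 2) / 2)) :=
    fun a _ b _ h => by
      simpa [pi_ne_zero, hk₁] using h
  have hdisj : Disjoint ((Finset.range ((k + 1) / 2 + 1)).image fun m : ℕ => 2 * π * m / (k + 1))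
      ((Finset.Icc 1 ((k - 2) / 2)).image fun m : ℕ => 2 * π * m / (k - 1)) := by
    simp only [Finset.disjoint_left, Finset.mem_image, Finset.mem_range, Finset.mem_Icc]
    rintro _ ⟨a, -, rfl⟩ ⟨b, hb, hab⟩
    exact two_pi_mul_div_add_one_ne_div_sub_one hb.1 (by omega) hab.symm
  rw [chebyshevFixedAngles, Finset.card_union_of_disjoint hdisj, Finset.card_image_of_injOn hinj₁,
    Finset.card_image_of_injOn hinj₂, Finset.card_range, Nat.card_Icc]
  omega

theorem le_card_roots_chebyshev_C_sub_X {k : ℕ} (hk : 2 ≤ k) :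
    k ≤ (Chebyshev.C ℂ k - X).roots.toFinset.card := by
  have hne : Chebyshev.C ℂ k - X ≠ 0 :=
    ne_zero_of_natDegree_gt ((Chebyshev.natDegree_C_natCast_sub_X (K := ℂ) hk).symm ▸ hk)
  have hinj : Set.InjOn (fun θ : ℝ => 2 * Complex.cos θ) ↑(chebyshevFixedAngles k) := by
    refine fun a ha b hb h => injOn_cos (chebyshevFixedAngles_subset_Icc k ha)
      (chebyshevFixedAngles_subset_Icc k hb) ?_
    simpa [← Complex.ofReal_cos] using h
  calc k = ((chebyshevFixedAngles k).image fun θ : ℝ => 2 * Complex.cos θ).card := by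
        rw [Finset.card_image_of_injOn hinj, card_chebyshevFixedAngles hk]
    _ ≤ _ := Finset.card_le_card fun x hx => by
        obtain ⟨θ, hθ, rfl⟩ := Finset.mem_image.mp hx
        rw [Multiset.mem_toFinset, mem_roots hne, IsRoot, eval_sub, eval_X, sub_eq_zero,
          Chebyshev.C_two_mul_complex_cos]
        exact_mod_cast congrArg (2 * ·) (cos_mul_eq_cos_of_mem_chebyshevFixedAngles hθ)

/-- The normalized Chebyshev polynomial `T_k` (with `T_k(z + 1/z) = z^k + z^{-k}`)
has exactly `k` complex fixed points, for every `k ≥ 2`. -/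
theorem stmt_6 (k : ℕ) (hk : 2 ≤ k) (f : Polynomial ℤ)
    (hf : ∀ z : ℂ, z ≠ 0 → f.eval₂ (Int.castRingHom ℂ) (z + z⁻¹) = z ^ k + z⁻¹ ^ k) :
    {x : ℂ | f.eval₂ (Int.castRingHom ℂ) x = x}.ncard = k := by
  have hmap : f.map (Int.castRingHom ℂ) = Chebyshev.C ℂ k :=
    eq_chebyshev_C_of_eval_add_inv fun z hz => by rw [eval_map, hf z hz]
  have hdeg : (Chebyshev.C ℂ k - X).natDegree = k := Chebyshev.natDegree_C_natCast_sub_X hk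
  have hne : Chebyshev.C ℂ k ≠ X := sub_ne_zero.mp (ne_zero_of_natDegree_gt (hdeg ▸ hk))
  simp_rw [← eval_map, hmap]
  rw [setOf_eval_eq_self_eq_roots hne, Set.ncard_coe_finset]
  refine le_antisymm ?_ (le_card_roots_chebyshev_C_sub_X hk)
  calc _ ≤ Multiset.card (Chebyshev.C ℂ k - X).roots := Multiset.toFinset_card_le _
    _ ≤ k := (card_roots' _).trans_eq hdeg
end

section
/- Let k ≥ 2 and q ≥ 2 be integers such that for every w in a finite set W of n×n integer matrices of finite order, qI_n - T_w is invertible modulo k. Let X = ∪_{w∈W} { x ∈ (Q/Z)^n : (qI_n - T_w)x = 0 }. Then multiplication by k maps X bijectively onto X. -/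
/-- Kernel elements of an integer matrix acting on `(ℚ/ℤ)ⁿ` are killed by the determinant. -/
lemma stmt_15_key {n : ℕ} (B : Matrix (Fin n) (Fin n) ℤ) (x : Fin n → AddCircle (1 : ℚ))
    (h : ∀ i, ∑ j, B i j • x j = 0) : ∀ i, B.det • x i = 0 := by
  intro i
  have h1 : B.det • x i = ∑ j, ((B.adjugate * B) i j) • x j := by
    rw [Matrix.adjugate_mul]
    simp [Matrix.smul_apply, Matrix.one_apply, mul_ite, ite_smul, Finset.sum_ite_eq]
  rw [h1]
  calc ∑ j, ((B.adjugate * B) i j) • x j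
      = ∑ j, ∑ l, (B.adjugate i l * B l j) • x j := by
        simp [Matrix.mul_apply, Finset.sum_smul]
    _ = ∑ l, B.adjugate i l • ∑ j, B l j • x j := by
        rw [Finset.sum_comm]
        simp [mul_smul, Finset.smul_sum]
    _ = 0 := by simp [h]

/-- If each `q·I - w` (for `w` in a finite set of finite-order integer matrices) is
invertible mod `k`, then multiplication by `k` is a bijection of
`X = ∪_w ker(q·I - w) ⊆ (ℚ/ℤ)^n`. -/
theorem stmt_15 (n k q : ℕ) (hk : 2 ≤ k) (hq : 2 ≤ q)
    (W : Finset (Matrix (Fin n) (Fin n) ℤ))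
    (hord : ∀ w ∈ W, ∃ s : ℕ, 0 < s ∧ w ^ s = 1)
    (hinv : ∀ w ∈ W,
      IsUnit ((((q : ℤ) • (1 : Matrix (Fin n) (Fin n) ℤ) - w).det : ZMod k))) :
    Set.BijOn (fun x : Fin n → AddCircle (1 : ℚ) => k • x)
      {x : Fin n → AddCircle (1 : ℚ) | ∃ w ∈ W, ∀ i,
        ∑ j, (((q : ℤ) • (1 : Matrix (Fin n) (Fin n) ℤ) - w) i j) • x j = 0}
      {x : Fin n → AddCircle (1 : ℚ) | ∃ w ∈ W, ∀ i,
        ∑ j, (((q : ℤ) • (1 : Matrix (Fin n) (Fin n) ℤ) - w) i j) • x j = 0} := by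
  -- Bézout: for each w, there is c with x = c • (k • x) for every det-torsion x.
  have bez : ∀ w ∈ W, ∃ c : ℤ, ∀ x : Fin n → AddCircle (1 : ℚ),
      (∀ i, ((q : ℤ) • (1 : Matrix (Fin n) (Fin n) ℤ) - w).det • x i = 0) →
      ∀ i, x i = c • ((k : ℤ) • x i) := by
    intro w hw
    set D : ℤ := ((q : ℤ) • (1 : Matrix (Fin n) (Fin n) ℤ) - w).det with hD
    obtain ⟨b, hb⟩ := hinv w hw
    obtain ⟨u, hu⟩ := ZMod.intCast_surjective ((b⁻¹ : (ZMod k)ˣ) : ZMod k)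
    have h1 : ((u * D - 1 : ℤ) : ZMod k) = 0 := by
      push_cast
      rw [hu, ← hb]
      simp
    obtain ⟨v, hv⟩ := (ZMod.intCast_zmod_eq_zero_iff_dvd _ k).mp h1
    refine ⟨-v, fun x hx i => ?_⟩
    have h2 : (1 : ℤ) = u * D - (k : ℤ) * v := by linarith [hv]
    calc x i = (1 : ℤ) • x i := (one_smul _ _).symm
      _ = (u * D - (k : ℤ) * v) • x i := by rw [← h2]
      _ = u • (D • x i) - v • ((k : ℤ) • x i) := by
          rw [sub_smul, mul_smul, smul_smul, smul_smul, mul_comm (k : ℤ) v]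
      _ = (-v) • ((k : ℤ) • x i) := by rw [hx i, smul_zero, zero_sub, neg_smul]
  constructor
  · -- MapsTo
    rintro x ⟨w, hw, hker⟩
    refine ⟨w, hw, fun i => ?_⟩
    have : ∀ j, ((q : ℤ) • (1 : Matrix (Fin n) (Fin n) ℤ) - w) i j • (k • x) j
        = k • (((q : ℤ) • (1 : Matrix (Fin n) (Fin n) ℤ) - w) i j • x j) := by
      intro j; rw [Pi.smul_apply]; exact smul_comm _ _ _
    simp only [this, ← Finset.smul_sum, hker i, smul_zero]
  constructor
  · -- InjOn
    rintro x ⟨w1, hw1, h1⟩ y ⟨w2, hw2, h2⟩ heq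
    obtain ⟨c2, hc2⟩ := bez w2 hw2
    obtain ⟨c1, hc1⟩ := bez w1 hw1
    have hx := stmt_15_key _ x h1
    have hy := stmt_15_key _ y h2
    have heq' : ∀ i, (k : ℤ) • x i = (k : ℤ) • y i := by
      intro i
      have := congrFun heq i
      simpa [natCast_zsmul] using this
    set D2 : ℤ := ((q : ℤ) • (1 : Matrix (Fin n) (Fin n) ℤ) - w2).det with hD2
    have hx2 : ∀ i, D2 • x i = 0 := by
      intro i
      have e1 : x i = c1 • ((k : ℤ) • y i) := by rw [← heq' i]; exact hc1 x hx i
      have : D2 * c1 * (k : ℤ) = (c1 * (k : ℤ)) * D2 := by ring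
      calc D2 • x i = (D2 * c1 * (k : ℤ)) • y i := by rw [e1, smul_smul, smul_smul]
        _ = (c1 * (k : ℤ)) • (D2 • y i) := by rw [this, ← smul_smul]
        _ = 0 := by rw [hy i, smul_zero]
    funext i
    rw [hc2 x hx2 i, hc2 y hy i, heq' i]
  · -- SurjOn
    rintro y ⟨w, hw, hker⟩
    obtain ⟨c, hc⟩ := bez w hw
    have hy := stmt_15_key _ y hker
    refine ⟨fun j => c • y j, ⟨w, hw, fun i => ?_⟩, ?_⟩
    · have : ∀ j, ((q : ℤ) • (1 : Matrix (Fin n) (Fin n) ℤ) - w) i j • (c • y j)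
          = c • (((q : ℤ) • (1 : Matrix (Fin n) (Fin n) ℤ) - w) i j • y j) := by
        intro j; exact smul_comm _ _ _
      simp only [this, ← Finset.smul_sum, hker i, smul_zero]
    · funext i
      have : k • (c • y i) = c • ((k : ℤ) • y i) := by
        rw [smul_comm, natCast_zsmul]
      simp only [Pi.smul_apply, this]
      exact (hc y hy i).symm
end
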